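/- arXiv:2407.17686 — 5 statements merged into one kernel-verified Lean document; each statement's English description precedes it below -/
import Mathlib

section
/- Let a, b : Fin k → Fin S with a ≠ b, and set u = ∑_{j=0}^{k-1} 3^j e_{a(j)}, v = ∑_{j=0}^{k-1} 3^j e_{b(j)} in ℝ^S. Then ‖u/‖u‖₂ - v/‖v‖₂‖₂ ≥ 3^{-k}. -/
/-- The encoding z(a) = ∑_j 3^j e_{a(j)} of a k-symbol sequence. -/
noncomputable def zvec (S k : ℕ) (a : Fin k → Fin S) : EuclideanSpace ℝ (Fin S) :=
  ∑ j : Fin k, (3 : ℝ) ^ (j : ℕ) • EuclideanSpace.single (a j) (1 : ℝ)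

lemma zvec_apply (S k : ℕ) (a : Fin k → Fin S) (s : Fin S) :
    zvec S k a s = ∑ j : Fin k, if a j = s then (3:ℝ)^(j:ℕ) else 0 := by
  have : zvec S k a s = ∑ j : Fin k, ((3 : ℝ) ^ (j : ℕ) • EuclideanSpace.single (a j) (1 : ℝ)) s := by
    unfold zvec
    rw [WithLp.ofLp_sum]
    exact Finset.sum_apply s Finset.univ _
  rw [this]
  simp [EuclideanSpace.single_apply, eq_comm]

lemma zvec_nonneg (S k : ℕ) (a : Fin k → Fin S) (s : Fin S) : 0 ≤ zvec S k a s := by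
  rw [zvec_apply]
  apply Finset.sum_nonneg
  intro j _
  split <;> positivity

lemma abs_coord_le {S : ℕ} (x : EuclideanSpace ℝ (Fin S)) (s : Fin S) : |x s| ≤ ‖x‖ := by
  rw [EuclideanSpace.norm_eq]
  rw [show |x s| = Real.sqrt ((x s)^2) by rw [Real.sqrt_sq_eq_abs]]
  apply Real.sqrt_le_sqrt
  simpa [sq_abs] using Finset.single_le_sum (f := fun i => (x i)^2)
    (fun i _ => sq_nonneg _) (Finset.mem_univ s)

lemma geom3 (n : ℕ) : ∑ i ∈ Finset.range n, (3:ℝ)^i = ((3:ℝ)^n - 1)/2 := by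
  rw [geom_sum_eq (by norm_num : (3:ℝ) ≠ 1)]
  norm_num

lemma norm_zvec_le (S k : ℕ) (a : Fin k → Fin S) :
    ‖zvec S k a‖ ≤ ((3:ℝ)^k - 1)/2 := by
  calc ‖zvec S k a‖ ≤ ∑ j : Fin k, ‖(3 : ℝ) ^ (j : ℕ) • EuclideanSpace.single (a j) (1 : ℝ)‖ :=
        norm_sum_le _ _
    _ = ∑ j : Fin k, (3:ℝ)^(j:ℕ) := by
        apply Finset.sum_congr rfl
        intro j _
        rw [norm_smul, EuclideanSpace.norm_single]
        simp [abs_of_nonneg]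
    _ = ∑ i ∈ Finset.range k, (3:ℝ)^i := by
        rw [Finset.sum_range fun i => (3:ℝ)^i]
    _ = ((3:ℝ)^k - 1)/2 := geom3 k

lemma zvec_coord_ge (S k : ℕ) (a : Fin k → Fin S) (j0 : Fin k) :
    (3:ℝ)^(j0:ℕ) ≤ zvec S k a (a j0) := by
  rw [zvec_apply]
  have := Finset.single_le_sum (f := fun j => if a j = a j0 then (3:ℝ)^(j:ℕ) else 0)
    (fun j _ => by split <;> positivity) (Finset.mem_univ j0)
  simpa using this

lemma norm_zvec_pos (S k : ℕ) (hk : 1 ≤ k) (a : Fin k → Fin S) : 0 < ‖zvec S k a‖ := by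
  rw [norm_pos_iff]
  intro h
  have h1 := zvec_coord_ge S k a ⟨0, hk⟩
  rw [h] at h1
  simp at h1
  norm_num at h1

/-- Key coordinate separation. -/
lemma key (S k : ℕ) (a b : Fin k → Fin S) (hab : a ≠ b) :
    ∃ s : Fin S, 1 ≤ zvec S k a s - zvec S k b s := by
  set c : Finset (Fin k) := Finset.univ.filter (fun j => a j ≠ b j) with hcdef
  have hc : c.Nonempty := by
    rcases Function.ne_iff.mp hab with ⟨j, hj⟩
    exact ⟨j, by simp [hcdef, hj]⟩
  set m := c.max' hc with hm
  have hmc : m ∈ c := c.max'_mem hc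
  have hmne : a m ≠ b m := by simpa [hcdef] using hmc
  refine ⟨a m, ?_⟩
  rw [zvec_apply, zvec_apply, ← Finset.sum_sub_distrib]
  set f : Fin k → ℝ := fun j =>
    (if a j = a m then (3:ℝ)^(j:ℕ) else 0) - (if b j = a m then (3:ℝ)^(j:ℕ) else 0) with hfdef
  have hsum : ∑ j : Fin k, f j = ∑ j ∈ c, f j := by
    symm
    apply Finset.sum_subset (Finset.subset_univ c)
    intro j _ hj
    have : a j = b j := by
      by_contra h
      exact hj (by simp [hcdef, h])
    simp [hfdef, this]
  rw [hsum, ← Finset.add_sum_erase c f hmc]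
  have hfm : f m = (3:ℝ)^(m:ℕ) := by
    simp [hfdef, hmne.symm]
  have hrest : -(((3:ℝ)^(m:ℕ) - 1)/2) ≤ ∑ j ∈ c.erase m, f j := by
    have h1 : ∑ j ∈ c.erase m, -((3:ℝ)^(j:ℕ)) ≤ ∑ j ∈ c.erase m, f j := by
      apply Finset.sum_le_sum
      intro j _
      have e : f j = (if a j = a m then (3:ℝ)^(j:ℕ) else 0)
          - (if b j = a m then (3:ℝ)^(j:ℕ) else 0) := rfl
      have p1 : (0:ℝ) ≤ if a j = a m then (3:ℝ)^(j:ℕ) else 0 := by split <;> positivity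
      have p2 : (if b j = a m then (3:ℝ)^(j:ℕ) else 0) ≤ (3:ℝ)^(j:ℕ) := by
        split
        · exact le_rfl
        · positivity
      rw [e]; linarith
    have h2 : ∑ j ∈ c.erase m, (3:ℝ)^(j:ℕ) ≤ ∑ i ∈ Finset.range (m:ℕ), (3:ℝ)^i := by
      rw [show ∑ j ∈ c.erase m, (3:ℝ)^(j:ℕ) = ∑ i ∈ (c.erase m).image Fin.val, (3:ℝ)^i by
        rw [Finset.sum_image (fun x _ y _ h => Fin.val_injective h)]]
      apply Finset.sum_le_sum_of_subset_of_nonneg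
      · intro i hi
        rcases Finset.mem_image.mp hi with ⟨j, hj, rfl⟩
        have hjm : j ≠ m := (Finset.mem_erase.mp hj).1
        have hjc : j ∈ c := (Finset.mem_erase.mp hj).2
        have hle : j ≤ m := c.le_max' j hjc
        exact Finset.mem_range.mpr (lt_of_le_of_ne (Fin.le_def.mp hle)
          (fun h => hjm (Fin.val_injective h)))
      · intros; positivity
    rw [geom3] at h2
    have h3 : ∑ j ∈ c.erase m, -((3:ℝ)^(j:ℕ)) = -∑ j ∈ c.erase m, (3:ℝ)^(j:ℕ) := by
      rw [Finset.sum_neg_distrib]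
    linarith
  have hpow : (1:ℝ) ≤ (3:ℝ)^(m:ℕ) := by
    have : (3:ℝ)^(0:ℕ) ≤ (3:ℝ)^(m:ℕ) := pow_le_pow_right₀ (by norm_num) (Nat.zero_le _)
    simpa using this
  linarith [hfm, hrest]

lemma main_lemma (S k : ℕ) (hk : 1 ≤ k) (a b : Fin k → Fin S) (hab : a ≠ b)
    (hAB : ‖zvec S k a‖ ≤ ‖zvec S k b‖) :
    ‖‖zvec S k a‖⁻¹ • zvec S k a - ‖zvec S k b‖⁻¹ • zvec S k b‖ ≥ ((3 : ℝ) ^ k)⁻¹ := by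
  obtain ⟨s, hs⟩ := key S k a b hab
  set u := zvec S k a with hu
  set v := zvec S k b with hv
  have hA : 0 < ‖u‖ := norm_zvec_pos S k hk a
  have hB : 0 < ‖v‖ := norm_zvec_pos S k hk b
  have h3k : (0:ℝ) < (3:ℝ)^k := by positivity
  have hBle : ‖v‖ ≤ (3:ℝ)^k := by
    have := norm_zvec_le S k b
    rw [← hv] at this
    linarith
  have hus : 0 ≤ u s := zvec_nonneg S k a s
  have hcoord : (‖u‖⁻¹ • u - ‖v‖⁻¹ • v) s = ‖u‖⁻¹ * u s - ‖v‖⁻¹ * v s := by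
    simp [PiLp.sub_apply, PiLp.smul_apply, smul_eq_mul]
  have step1 : ‖v‖⁻¹ * u s ≤ ‖u‖⁻¹ * u s := by
    apply mul_le_mul_of_nonneg_right _ hus
    exact inv_anti₀ hA hAB
  have step3 : ((3:ℝ)^k)⁻¹ ≤ ‖v‖⁻¹ := inv_anti₀ hB hBle
  have hvinv : (0:ℝ) < ‖v‖⁻¹ := by positivity
  have chain : ((3:ℝ)^k)⁻¹ ≤ ‖u‖⁻¹ * u s - ‖v‖⁻¹ * v s := by
    have : ‖v‖⁻¹ * 1 ≤ ‖v‖⁻¹ * (u s - v s) := by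
      apply mul_le_mul_of_nonneg_left hs (le_of_lt hvinv)
    nlinarith
  calc ((3:ℝ)^k)⁻¹ ≤ ‖u‖⁻¹ * u s - ‖v‖⁻¹ * v s := chain
    _ ≤ |(‖u‖⁻¹ • u - ‖v‖⁻¹ • v) s| := by rw [hcoord]; exact le_abs_self _
    _ ≤ ‖‖u‖⁻¹ • u - ‖v‖⁻¹ • v‖ := abs_coord_le _ s

/-- Quantitative separation: if a ≠ b then the normalized encodings are at least
3^{-k} apart in Euclidean distance. -/
theorem normalized_zvec_separation (S k : ℕ) (hk : 1 ≤ k) (a b : Fin k → Fin S)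
    (hab : a ≠ b) :
    ‖‖zvec S k a‖⁻¹ • zvec S k a - ‖zvec S k b‖⁻¹ • zvec S k b‖ ≥ ((3 : ℝ) ^ k)⁻¹ := by
  rcases le_total ‖zvec S k a‖ ‖zvec S k b‖ with h | h
  · exact main_lemma S k hk a b hab h
  · have := main_lemma S k hk b a (Ne.symm hab) h
    rwa [norm_sub_rev] at this
end

section
/- Let a, b : Fin k → Fin S with a ≠ b, and let j* be the largest index j with a(j) ≠ b(j). Set u = ∑_j 3^j e_{a(j)} and v = ∑_j 3^j e_{b(j)}. Then ⟨u, e_{a(j*)}⟩ - ⟨v, e_{a(j*)}⟩ ≥ 3^{j*}/2. -/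
open scoped InnerProductSpace

lemma zvec_inner (S k : ℕ) (c : Fin k → Fin S) (s : Fin S) :
    ⟪zvec S k c, EuclideanSpace.single s (1:ℝ)⟫_ℝ
      = ∑ j : Fin k, if s = c j then (3:ℝ)^(j:ℕ) else 0 := by
  simp [zvec, sum_inner, real_inner_smul_left]
  refine Finset.sum_congr rfl (fun j _ => ?_)
  rw [EuclideanSpace.inner_single_left, EuclideanSpace.single_apply]
  split_ifs <;> simp_all

/-- If j* is the largest index where a and b differ, then the coordinate a(j*)
of u = z(a) exceeds that of v = z(b) by at least 3^{j*}/2. -/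
theorem zvec_coord_gap (S k : ℕ) (a b : Fin k → Fin S) (hab : a ≠ b)
    (jstar : Fin k) (hdiff : a jstar ≠ b jstar)
    (hmax : ∀ j : Fin k, jstar < j → a j = b j) :
    ⟪zvec S k a, EuclideanSpace.single (a jstar) (1 : ℝ)⟫_ℝ -
      ⟪zvec S k b, EuclideanSpace.single (a jstar) (1 : ℝ)⟫_ℝ ≥
      (3 : ℝ) ^ (jstar : ℕ) / 2 := by
  rw [zvec_inner, zvec_inner, ← Finset.sum_sub_distrib]
  have hstep : ∀ j : Fin k,
      ((if a jstar = a j then (3:ℝ)^(j:ℕ) else 0) - (if a jstar = b j then (3:ℝ)^(j:ℕ) else 0))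
        ≥ (if j = jstar then (3:ℝ)^(jstar:ℕ) else 0)
            + (if (j:ℕ) < (jstar:ℕ) then -(3:ℝ)^(j:ℕ) else 0) := by
    intro j
    rcases eq_or_ne j jstar with rfl | hj
    · rw [if_pos rfl, if_pos rfl, if_neg hdiff, if_neg (lt_irrefl _)]
      simp
    · rw [if_neg hj]
      rcases lt_or_ge (j : ℕ) (jstar : ℕ) with h | h
      · rw [if_pos h]
        have h1 : (0:ℝ) ≤ (if a jstar = a j then (3:ℝ)^(j:ℕ) else 0) := by
          split
          · positivity
          · rfl
        have h2 : (if a jstar = b j then (3:ℝ)^(j:ℕ) else 0) ≤ (3:ℝ)^(j:ℕ) := by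
          split
          · rfl
          · positivity
        linarith
      · rw [if_neg (not_lt.mpr h)]
        have hjj : jstar < j := lt_of_le_of_ne (by exact_mod_cast h) (Ne.symm hj)
        rw [hmax j hjj]
        simp
  have hgeom : ∑ i ∈ Finset.range (jstar : ℕ), (3:ℝ)^i = ((3:ℝ)^(jstar:ℕ) - 1)/2 := by
    rw [geom_sum_eq (by norm_num)]
    norm_num
  have hsum2 : ∑ j : Fin k, (if (j:ℕ) < (jstar:ℕ) then -(3:ℝ)^(j:ℕ) else 0)
      = -(((3:ℝ)^(jstar:ℕ) - 1)/2) := by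
    rw [Fin.sum_univ_eq_sum_range (fun i => if i < (jstar:ℕ) then -(3:ℝ)^i else 0) k]
    rw [← Finset.sum_subset (Finset.range_subset_range.mpr jstar.isLt.le)
      (by intro x hx hnx; simp_all)]
    rw [← hgeom, ← Finset.sum_neg_distrib]
    exact Finset.sum_congr rfl (by intro x hx; rw [if_pos (Finset.mem_range.mp hx)])
  calc ∑ j : Fin k, ((if a jstar = a j then (3:ℝ)^(j:ℕ) else 0) - (if a jstar = b j then (3:ℝ)^(j:ℕ) else 0))
      ≥ ∑ j : Fin k, ((if j = jstar then (3:ℝ)^(jstar:ℕ) else 0)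
            + (if (j:ℕ) < (jstar:ℕ) then -(3:ℝ)^(j:ℕ) else 0)) :=
        Finset.sum_le_sum (fun j _ => hstep j)
    _ ≥ (3:ℝ)^(jstar:ℕ)/2 := by
        rw [Finset.sum_add_distrib, Finset.sum_ite_eq' Finset.univ jstar, hsum2]
        simp only [Finset.mem_univ, if_pos]
        have : (0:ℝ) < (3:ℝ)^(jstar:ℕ) := by positivity
        linarith
end

section
/- Let M ∈ ℝ^{m×k} be a matrix and let H_k = {-1,1}^k. If rank of the augmented matrix [Mᵀ; mᵀ] (for any vector m ∈ ℝ^k appended as a row) is at most k-1, then there exists a point v ∈ H_k such that the image of v under x ↦ [Mᵀ; mᵀ]x is not an extreme point (vertex) of the convex hull of the image of H_k. -/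
/-!
Take a nonzero vector `u` in the kernel and let `v` be its sign vector. Flipping the `j`-th
coordinate of `v` moves it by `-2 vⱼ eⱼ`, so averaging the `k` flips with the weights
`|uⱼ| / ‖u‖₁` gives `v - (2 / ‖u‖₁) u`, a point with the same image as `v`.
-/

open Finset Function

section CommRing

variable {R ι : Type*} [CommRing R] [DecidableEq ι]

lemma update_neg_eq_sub_single (v : ι → R) (j : ι) :
    update v j (-v j) = v - Pi.single j (2 * v j) := by
  ext i
  rcases eq_or_ne i j with rfl | hij
  · simp only [update_self, Pi.sub_apply, Pi.single_eq_same]; ring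
  · simp [hij]

lemma sum_smul_update_neg [Fintype ι] (v w : ι → R) (hw : ∑ j, w j = 1) :
    ∑ j, w j • update v j (-v j) = v - (2 : R) • (w * v) := by
  simp only [update_neg_eq_sub_single, smul_sub, sum_sub_distrib, ← sum_smul, hw, one_smul]
  rw [← Finset.univ_sum_single ((2 : R) • (w * v))]
  congr 1
  refine sum_congr rfl fun j _ => ?_
  rw [← Pi.single_smul]
  simp [mul_left_comm]

end CommRing

section LinearOrderedField

variable {𝕜 ι : Type*} [Field 𝕜] [LinearOrder 𝕜]

def signVec (u : ι → 𝕜) : ι → 𝕜 := fun j => if 0 ≤ u j then 1 else -1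

lemma signVec_eq_one_or_neg_one (u : ι → 𝕜) (j : ι) : signVec u j = 1 ∨ signVec u j = -1 := by
  unfold signVec; split_ifs <;> simp

variable [IsStrictOrderedRing 𝕜]

lemma signVec_mul_abs (u : ι → 𝕜) (j : ι) : signVec u j * |u j| = u j := by
  unfold signVec
  split_ifs with h
  · simp [abs_of_nonneg h]
  · simp [abs_of_neg (not_le.mp h)]

variable [DecidableEq ι]

lemma update_neg_mem_hypercube_ne {v : ι → 𝕜} (hv : ∀ i, v i = 1 ∨ v i = -1) (j : ι) :
    update v j (-v j) ∈ {h : ι → 𝕜 | (∀ i, h i = 1 ∨ h i = -1) ∧ h ≠ v} := by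
  refine ⟨fun i => ?_, fun h => ?_⟩
  · rcases eq_or_ne i j with rfl | hij
    · rcases hv i with h | h <;> simp [h]
    · simpa [update_of_ne hij] using hv i
  · have := congrFun h j
    rcases hv j with h | h <;> simp [h] at this <;> norm_num at this

variable [Fintype ι]

lemma sub_smul_mem_convexHull_update_neg {u : ι → 𝕜} (hu : u ≠ 0) :
    signVec u - (2 / ∑ j, |u j|) • u ∈
      convexHull 𝕜 (Set.range fun j => update (signVec u) j (-signVec u j)) := by
  set s := ∑ j, |u j|
  have hs : 0 < s := by
    obtain ⟨j, hj⟩ := Function.ne_iff.mp hu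
    exact sum_pos' (fun j _ => abs_nonneg _) ⟨j, mem_univ _, abs_pos.mpr hj⟩
  have hw : ∑ j, |u j| / s = 1 := by rw [← sum_div, div_self hs.ne']
  have hwv : (fun j => |u j| / s) * signVec u = s⁻¹ • u := by
    ext j
    rw [Pi.mul_apply, div_mul_eq_mul_div, mul_comm, signVec_mul_abs, Pi.smul_apply, smul_eq_mul,
      div_eq_inv_mul]
  have hmem := (convex_convexHull 𝕜 _).sum_mem (fun j _ => div_nonneg (abs_nonneg _) hs.le) hw
    (fun j _ => subset_convexHull 𝕜 _ (Set.mem_range_self (f := fun j =>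
      update (signVec u) j (-signVec u j)) j))
  rwa [sum_smul_update_neg _ _ hw, hwv, smul_smul, ← div_eq_mul_inv] at hmem

theorem exists_hypercube_vertex_mem_convexHull_image_of_mem_ker {E : Type*} [AddCommGroup E]
    [Module 𝕜 E] (f : (ι → 𝕜) →ₗ[𝕜] E) {u : ι → 𝕜} (hu : u ≠ 0) (hfu : f u = 0) :
    ∃ v : ι → 𝕜, (∀ j, v j = 1 ∨ v j = -1) ∧
      f v ∈ convexHull 𝕜 (f '' {h : ι → 𝕜 | (∀ j, h j = 1 ∨ h j = -1) ∧ h ≠ v}) := by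
  refine ⟨signVec u, signVec_eq_one_or_neg_one u, ?_⟩
  have hfv : f (signVec u) = f (signVec u - (2 / ∑ j, |u j|) • u) := by
    simp [hfu]
  rw [hfv, ← f.image_convexHull]
  refine Set.mem_image_of_mem f (convexHull_mono ?_ (sub_smul_mem_convexHull_update_neg hu))
  rintro _ ⟨j, rfl⟩
  exact update_neg_mem_hypercube_ne (signVec_eq_one_or_neg_one u) j

end LinearOrderedField

theorem Matrix.exists_mulVec_eq_zero_of_rank_lt {K m n : Type*} [Field K] [Fintype n]
    [DecidableEq n] (A : Matrix m n K) (h : A.rank < Fintype.card n) :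
    ∃ u ≠ 0, A.mulVec u = 0 := by
  have hker : LinearMap.ker A.mulVecLin ≠ ⊥ := fun hbot => by
    rw [Matrix.rank, LinearMap.finrank_range_of_inj (LinearMap.ker_eq_bot.mp hbot)] at h
    simp at h
  obtain ⟨u, hu, hu0⟩ := Submodule.exists_mem_ne_zero_of_ne_bot hker
  exact ⟨u, hu0, hu⟩

theorem rank_deficient_collapses_hypercube_vertex_general (k : ℕ) (hk : 1 ≤ k)
    (A : Matrix (Fin (k + 1)) (Fin k) ℝ)
    (hrank : A.rank ≤ k - 1) :
    ∃ v : Fin k → ℝ, (∀ j, v j = 1 ∨ v j = -1) ∧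
      A.mulVec v ∈ convexHull ℝ
        (A.mulVec '' {h : Fin k → ℝ | (∀ j, h j = 1 ∨ h j = -1) ∧ h ≠ v}) := by
  obtain ⟨u, hu, hAu⟩ := A.exists_mulVec_eq_zero_of_rank_lt (by rw [Fintype.card_fin]; omega)
  exact exists_hypercube_vertex_mem_convexHull_image_of_mem_ker A.mulVecLin hu hAu

/-- If the augmented matrix [Mᵀ; mᵀ] has rank at most k-1, then some hypercube
vertex v ∈ {-1,1}^k is mapped into the convex hull of the images of the other
hypercube vertices (so its image is not a unique vertex of the convex hull of
the image of the hypercube). -/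
theorem rank_deficient_collapses_hypercube_vertex (k : ℕ) (hk : 1 ≤ k)
    (M : Matrix (Fin k) (Fin k) ℝ) (mv : Fin k → ℝ)
    (A : Matrix (Fin (k + 1)) (Fin k) ℝ)
    (hA : ∀ j, (∀ i : Fin k, A i.castSucc j = M.transpose i j) ∧ A (Fin.last k) j = mv j)
    (hrank : A.rank ≤ k - 1) :
    ∃ v : Fin k → ℝ, (∀ j, v j = 1 ∨ v j = -1) ∧
      A.mulVec v ∈ convexHull ℝ
        (A.mulVec '' {h : Fin k → ℝ | (∀ j, h j = 1 ∨ h j = -1) ∧ h ≠ v}) :=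
  rank_deficient_collapses_hypercube_vertex_general k hk A hrank
end

section
/- Let f(x, y) = xᵀ M y + yᵀ N y + mᵀ x + m̄ᵀ y + c be a function on {-1,1}^k × {-1,1}^k with M ∈ ℝ^{k×k} of rank at most k-2, N ∈ ℝ^{k×k}, m, m̄ ∈ ℝ^k, c ∈ ℝ. Then it is impossible that for every y ∈ {-1,1}^k, the unique maximizer over x ∈ {-1,1}^k of f(x, y) is x = y. -/
/-!
Flipping the `j`-th coordinate of `y` changes `f(·, y)` by `-2 yⱼ ((M y)ⱼ + mⱼ)`, so if `y` is the
unique maximizer then `yⱼ ((M y)ⱼ + mⱼ) > 0` for every sign vector `y` and every `j`. Applying this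
to `y` and `-y` gives `yⱼ (M y)ⱼ > 0`; choosing `yⱼ = 1` and `yᵢ = ∓1` according as `Mⱼᵢ ≥ 0` or `Mⱼᵢ < 0`
makes `(M y)ⱼ = Mⱼⱼ - ∑_{i ≠ j} |Mⱼᵢ|`. Hence `M` is strictly diagonally dominant, so invertible,
which contradicts `rank M ≤ k - 2` once `k ≥ 1`.
-/

open Matrix Finset

def signVectors (ι : Type*) : Set (ι → ℝ) := {x | ∀ i, x i = 1 ∨ x i = -1}

section

variable {ι : Type*}

lemma neg_mem_signVectors {y : ι → ℝ} (hy : y ∈ signVectors ι) : -y ∈ signVectors ι := fun i => by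
  rcases hy i with h | h <;> simp [h]

variable [DecidableEq ι]

lemma sub_single_mem_signVectors {y : ι → ℝ} (hy : y ∈ signVectors ι) (j : ι) :
    y - Pi.single j (2 * y j) ∈ signVectors ι := fun i => by
  rcases eq_or_ne i j with rfl | hij
  · rcases hy i with h | h <;> simp [h] <;> norm_num
  · simpa [hij] using hy i

variable [Fintype ι]

lemma mul_pos_of_forall_dotProduct_lt {y a : ι → ℝ} (hy : y ∈ signVectors ι)
    (hmax : ∀ x ∈ signVectors ι, x ≠ y → a ⬝ᵥ x < a ⬝ᵥ y) (j : ι) : 0 < y j * a j := by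
  have hne : y - Pi.single j (2 * y j) ≠ y := by
    intro h
    have hj := congrFun h j
    rcases hy j with h | h <;> simp [h] at hj
  have := hmax _ (sub_single_mem_signVectors hy j) hne
  rw [dotProduct_sub, dotProduct_single] at this
  linarith

lemma exists_mem_signVectors_mulVec_apply_eq (M : Matrix ι ι ℝ) (j : ι) :
    ∃ y ∈ signVectors ι, y j = 1 ∧ (M *ᵥ y) j = M j j - ∑ i ∈ univ.erase j, |M j i| := by
  refine ⟨fun i => if i = j then 1 else if 0 ≤ M j i then -1 else 1, fun i => ?_, by simp, ?_⟩
  · by_cases hij : i = j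
    · simp [hij]
    · by_cases hM : 0 ≤ M j i <;> simp [hij, hM]
  · rw [mulVec, dotProduct, ← add_sum_erase _ _ (mem_univ j), sub_eq_add_neg, ← sum_neg_distrib]
    refine congrArg₂ _ (by simp) (sum_congr rfl fun i hi => ?_)
    by_cases hM : 0 ≤ M j i
    · simp [ne_of_mem_erase hi, hM, abs_of_nonneg hM]
    · simp [ne_of_mem_erase hi, hM, abs_of_neg (not_le.mp hM)]

lemma Matrix.det_ne_zero_of_forall_signVectors_mul_pos {M : Matrix ι ι ℝ} {m : ι → ℝ}
    (hpos : ∀ y ∈ signVectors ι, ∀ j, 0 < y j * ((M *ᵥ y) j + m j)) : M.det ≠ 0 := by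
  refine det_ne_zero_of_sum_row_lt_diag fun j => ?_
  obtain ⟨y, hy, hyj, hMy⟩ := exists_mem_signVectors_mulVec_apply_eq M j
  have h₁ := hpos y hy j
  have h₂ := hpos (-y) (neg_mem_signVectors hy) j
  rw [mulVec_neg, Pi.neg_apply, Pi.neg_apply, hyj] at h₂
  rw [hyj] at h₁
  have hsum : 0 ≤ ∑ i ∈ univ.erase j, |M j i| := sum_nonneg fun i _ => abs_nonneg _
  simp only [Real.norm_eq_abs]
  rw [abs_of_pos (by linarith)]
  linarith

end

/-- Low-rank lemma: if the cross-term matrix M has rank ≤ k-2, then the function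
f(x,y) = xᵀMy + yᵀNy + mᵀx + m̄ᵀy + c cannot have, for every hypercube point y,
the unique maximizer x = y over the hypercube. -/
theorem lowrank_no_exact_match_selector (k : ℕ) (hk : 1 ≤ k)
    (M N : Matrix (Fin k) (Fin k) ℝ) (m mb : Fin k → ℝ) (c : ℝ)
    (hM : M.rank ≤ k - 2) :
    ¬ (∀ y : Fin k → ℝ, (∀ j, y j = 1 ∨ y j = -1) →
        ∀ x : Fin k → ℝ, (∀ j, x j = 1 ∨ x j = -1) → x ≠ y →
          x ⬝ᵥ M.mulVec y + y ⬝ᵥ N.mulVec y + m ⬝ᵥ x + mb ⬝ᵥ y + c <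
          y ⬝ᵥ M.mulVec y + y ⬝ᵥ N.mulVec y + m ⬝ᵥ y + mb ⬝ᵥ y + c) := by
  intro H
  have hpos : ∀ y ∈ signVectors (Fin k), ∀ j, 0 < y j * ((M *ᵥ y) j + m j) := by
    intro y hy j
    refine mul_pos_of_forall_dotProduct_lt (a := M *ᵥ y + m) hy (fun x hx hxy => ?_) j
    have := H y hy x hx hxy
    rw [add_dotProduct, add_dotProduct, dotProduct_comm (M *ᵥ y) x, dotProduct_comm (M *ᵥ y) y]
    linarith
  have hunit : IsUnit M := (isUnit_iff_isUnit_det M).mpr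
    (isUnit_iff_ne_zero.mpr (det_ne_zero_of_forall_signVectors_mul_pos hpos))
  rw [rank_of_isUnit M hunit, Fintype.card_fin] at hM
  omega
end

section
/- Let x₁,...,x_T ∈ {0,1,2} be the sequence 2, a₁, b₁, 2, a₂, b₂, ..., 2, a_m, b_m, 2, 1 of length T = 3m+2 for bits a, b ∈ {0,1}^m, so that x_{3j-1} = a_j and x_{3j} = b_j. Suppose ∑_{j=1}^m 𝟙[a_j = 1] > 0. Then (∑_{i=3}^{T-1} 𝟙[x_i=1, x_{i-1}=1, x_{i-2}=2]) / (∑_{i=3}^{T-1} 𝟙[x_{i-1}=1, x_{i-2}=2]) = (∑_{j=1}^m 𝟙[a_j=1 ∧ b_j=1]) / (∑_{j=1}^m 𝟙[a_j=1]). -/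
/-- For the sequence 2, a₁, b₁, 2, a₂, b₂, ..., 2, a_m, b_m, 2, 1 of length 3m+2,
the conditional 3-gram probability of seeing symbol 2 (given final context 2, 1)
equals (∑_j 𝟙[a_j = 1 ∧ b_j = 1]) / (∑_j 𝟙[a_j = 1]). -/
theorem conditional_trigram_intersection (m : ℕ) (a b : ℕ → ℕ)
    (ha : ∀ j, a j ≤ 1) (hb : ∀ j, b j ≤ 1)
    (x : ℕ → ℕ)
    (hx : ∀ j ∈ Finset.Icc 1 m,
      x (3 * j - 2) = 2 ∧ x (3 * j - 1) = a j ∧ x (3 * j) = b j)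
    (hx1 : x (3 * m + 1) = 2) (hx2 : x (3 * m + 2) = 1)
    (hden : 0 < ∑ j ∈ Finset.Icc 1 m, (if a j = 1 then (1 : ℝ) else 0)) :
    (∑ i ∈ Finset.Icc 3 (3 * m + 1),
        (if x i = 1 ∧ x (i - 1) = 1 ∧ x (i - 2) = 2 then (1 : ℝ) else 0)) /
      (∑ i ∈ Finset.Icc 3 (3 * m + 1),
        (if x (i - 1) = 1 ∧ x (i - 2) = 2 then (1 : ℝ) else 0)) =
    (∑ j ∈ Finset.Icc 1 m, (if a j = 1 ∧ b j = 1 then (1 : ℝ) else 0)) /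
      (∑ j ∈ Finset.Icc 1 m, (if a j = 1 then (1 : ℝ) else 0)) := by
  -- any i in the range with x (i-2) = 2 must be a multiple of 3, i = 3j, j ∈ [1,m]
  have h2 : ∀ i ∈ Finset.Icc 3 (3 * m + 1), x (i - 2) = 2 →
      ∃ j ∈ Finset.Icc 1 m, i = 3 * j := by
    intro i hi hxi
    simp only [Finset.mem_Icc] at hi
    have hmod : i % 3 = 0 ∨ i % 3 = 1 ∨ i % 3 = 2 := by omega
    rcases hmod with h | h | h
    · refine ⟨i / 3, ?_, by omega⟩
      simp only [Finset.mem_Icc]; omega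
    · -- i = 3q+1, i-2 = 3q-1 with q ∈ [1,m], x (i-2) = a q ≤ 1, contradiction
      set q := i / 3 with hq
      have hqm : q ∈ Finset.Icc 1 m := by simp only [Finset.mem_Icc]; omega
      have := (hx q hqm).2.1
      have heq : i - 2 = 3 * q - 1 := by omega
      rw [heq, this] at hxi
      have := ha q; omega
    · -- i = 3q+2, i-2 = 3q with q ∈ [1,m], x (i-2) = b q ≤ 1, contradiction
      set q := i / 3 with hq
      have hqm : q ∈ Finset.Icc 1 m := by simp only [Finset.mem_Icc]; omega
      have := (hx q hqm).2.2
      have heq : i - 2 = 3 * q := by omega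
      rw [heq, this] at hxi
      have := hb q; omega
  have hsub : (Finset.Icc 1 m).image (fun j => 3 * j) ⊆ Finset.Icc 3 (3 * m + 1) := by
    intro i hi
    simp only [Finset.mem_image, Finset.mem_Icc] at hi ⊢
    omega
  have hinj : ∀ j ∈ Finset.Icc 1 m, ∀ k ∈ Finset.Icc 1 m, 3 * j = 3 * k → j = k := by
    intro j _ k _ h; omega
  have hnum : (∑ i ∈ Finset.Icc 3 (3 * m + 1),
        (if x i = 1 ∧ x (i - 1) = 1 ∧ x (i - 2) = 2 then (1 : ℝ) else 0)) =
      ∑ j ∈ Finset.Icc 1 m, (if a j = 1 ∧ b j = 1 then (1 : ℝ) else 0) := by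
    rw [← Finset.sum_subset hsub]
    · rw [Finset.sum_image hinj]
      refine Finset.sum_congr rfl fun j hj => ?_
      obtain ⟨h1, h2', h3⟩ := hx j hj
      rw [show 3 * j - 1 = 3 * j - 1 from rfl, h2', h3, h1]
      by_cases hA : a j = 1 <;> by_cases hB : b j = 1 <;> simp [hA, hB]
    · intro i hi hni
      split_ifs with h
      · exfalso
        obtain ⟨j, hj, rfl⟩ := h2 i hi h.2.2
        exact hni (Finset.mem_image.mpr ⟨j, hj, rfl⟩)
      · rfl
  have hden' : (∑ i ∈ Finset.Icc 3 (3 * m + 1),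
        (if x (i - 1) = 1 ∧ x (i - 2) = 2 then (1 : ℝ) else 0)) =
      ∑ j ∈ Finset.Icc 1 m, (if a j = 1 then (1 : ℝ) else 0) := by
    rw [← Finset.sum_subset hsub]
    · rw [Finset.sum_image hinj]
      refine Finset.sum_congr rfl fun j hj => ?_
      obtain ⟨h1, h2', _⟩ := hx j hj
      rw [h2', h1]
      by_cases hA : a j = 1 <;> simp [hA]
    · intro i hi hni
      split_ifs with h
      · exfalso
        obtain ⟨j, hj, rfl⟩ := h2 i hi h.2
        exact hni (Finset.mem_image.mpr ⟨j, hj, rfl⟩)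
      · rfl
  rw [hnum, hden']
end
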